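/- Let Q⁴ be a unit 4-cube and let F² be a single 2-face of Q⁴. Then F² meets exactly twelve other 2-faces of Q⁴, and the eleven 2-faces of Q⁴ disjoint from F² are distributed as follows: six of them lie in one 3-face C³ of Q⁴, and the remaining five lie in a neighboring 3-face D³ with C³ ∩ D³ a single 2-face. -/

import Mathlib

open scoped Classical

/-- A `k`-dimensional face of the cubulation of `ℝⁿ` at scale `1/m`:
free coordinates in `S`, the rest fixed at lattice values `v i / m`. -/
def sFace (n m : ℕ) (v : Fin n → ℤ) (S : Finset (Fin n)) : Set (Fin n → ℝ) :=
  {x | ∀ i, (i ∈ S → (v i : ℝ) / m ≤ x i ∧ x i ≤ ((v i : ℝ) + 1) / m) ∧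
        (i ∉ S → x i = (v i : ℝ) / m)}

/-- The collection of all `k`-faces of the cubulation of `ℝⁿ` at scale `1/m`. -/
def sFaces (n m k : ℕ) : Set (Set (Fin n → ℝ)) :=
  {F | ∃ (v : Fin n → ℤ) (S : Finset (Fin n)), S.card = k ∧ F = sFace n m v S}

/-- The `k`-skeleton of the cubulation of `ℝⁿ` at scale `1/m`. -/
def skeleton (n m k : ℕ) : Set (Fin n → ℝ) := ⋃₀ sFaces n m k


/-- The unit 4-cube `[0,1]⁴`. -/
def Q4 : Set (Fin 4 → ℝ) := sFace 4 1 0 Finset.univ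

/-- The 2-faces of the unit 4-cube. -/
def twoFacesQ4 : Set (Set (Fin 4 → ℝ)) := {G ∈ sFaces 4 1 2 | G ⊆ Q4}

/-- The 3-faces of the unit 4-cube. -/
def threeFacesQ4 : Set (Set (Fin 4 → ℝ)) := {G ∈ sFaces 4 1 3 | G ⊆ Q4}

/-!
A face of `[0,1]ⁿ` is encoded by `f : Fin n → Option Bool`, with `none` for a free coordinate
and `some b` for a coordinate fixed at `b`. Faces are products of coordinate sets, so inclusion
and disjointness are decided coordinatewise; in particular two faces are disjoint iff some
coordinate is fixed at opposite values in them. If the square `F` fixes `xᵢ = a` and `xⱼ = b`,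
every 2-face disjoint from `F` therefore lies in the facet `C = {xᵢ = ¬a}` or `D = {xⱼ = ¬b}`,
and `C ∩ D` is the square opposite `F`. The counts are finite checks over the 81 codes.
-/

open Finset

namespace UnitCube

def coordSet : Option Bool → Set ℝ
  | none => Set.Icc 0 1
  | some false => {0}
  | some true => {1}

lemma coordSet_nonempty (o : Option Bool) : (coordSet o).Nonempty := by
  rcases o with _ | _ | _ <;> simp [coordSet]

lemma coordSet_subset_Icc (o : Option Bool) : coordSet o ⊆ Set.Icc 0 1 := by
  rcases o with _ | _ | _ <;> simp [coordSet]

lemma coordSet_subset_coordSet_iff {o p : Option Bool} :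
    coordSet o ⊆ coordSet p ↔ p = none ∨ o = p := by
  rcases o with _ | _ | _ <;> rcases p with _ | _ | _ <;> simp [coordSet]
  exacts [⟨1, by norm_num⟩, ⟨0, by norm_num⟩]

lemma coordSet_inter_eq_empty_iff {o p : Option Bool} :
    coordSet o ∩ coordSet p = ∅ ↔ ∃ c, o = some c ∧ p = some !c := by
  rcases o with _ | _ | _ <;> rcases p with _ | _ | _ <;> simp [coordSet, Set.Icc_eq_empty_iff]

lemma coordSet_inter_coordSet_of_nonempty {o p : Option Bool}
    (h : (coordSet o ∩ coordSet p).Nonempty) : coordSet o ∩ coordSet p = coordSet (o.or p) := by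
  rcases o with _ | _ | _ <;> rcases p with _ | _ | _ <;> simp_all [coordSet]

lemma exists_coordSet_eq {v : ℤ} {free : Prop} [Decidable free]
    (h : (if free then Set.Icc (v : ℝ) (v + 1) else {(v : ℝ)}) ⊆ Set.Icc 0 1) :
    ∃ o : Option Bool, (o = none ↔ free) ∧
      coordSet o = if free then Set.Icc (v : ℝ) (v + 1) else {(v : ℝ)} := by
  split_ifs at h ⊢ with hfree
  · have : v = 0 := by
      have h0 := (h (Set.left_mem_Icc.2 (by linarith))).1
      have h1 := (h (Set.right_mem_Icc.2 (by linarith))).2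
      exact_mod_cast le_antisymm (by linarith) h0
    exact ⟨none, by simp [hfree], by simp [coordSet, this]⟩
  · obtain ⟨h0, h1⟩ := Set.singleton_subset_iff.1 h
    have : v = 0 ∨ v = 1 := by
      have : (0 : ℤ) ≤ v := by exact_mod_cast h0
      have : v ≤ 1 := by exact_mod_cast h1
      omega
    rcases this with rfl | rfl
    · exact ⟨some false, by simp [hfree], by simp [coordSet]⟩
    · exact ⟨some true, by simp [hfree], by simp [coordSet]⟩

variable {n : ℕ}

lemma sFace_one_eq_pi (v : Fin n → ℤ) (S : Finset (Fin n)) :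
    sFace n 1 v S =
      Set.univ.pi fun i => if i ∈ S then Set.Icc (v i : ℝ) (v i + 1) else {(v i : ℝ)} := by
  ext x
  simp only [sFace, Nat.cast_one, div_one, Set.mem_ofPred_eq, Set.mem_pi, Set.mem_univ,
    true_implies]
  refine forall_congr' fun i => ?_
  by_cases hi : i ∈ S <;> simp [hi]

def face (f : Fin n → Option Bool) : Set (Fin n → ℝ) := Set.univ.pi fun i => coordSet (f i)

def freeCoords (f : Fin n → Option Bool) : Finset (Fin n) := {i | f i = none}

def cubeFaces (n k : ℕ) : Set (Set (Fin n → ℝ)) := {G ∈ sFaces n 1 k | G ⊆ sFace n 1 0 univ}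

lemma cube_eq_pi : sFace n 1 0 univ = Set.univ.pi fun _ => Set.Icc 0 1 := by
  simp [sFace_one_eq_pi]

lemma face_mem_sFaces (f : Fin n → Option Bool) : face f ∈ sFaces n 1 #(freeCoords f) := by
  refine ⟨fun i => if f i = some true then 1 else 0, _, rfl, ?_⟩
  rw [sFace_one_eq_pi, face]
  congr! 2 with i
  rcases h : f i with _ | _ | _ <;> simp [freeCoords, coordSet, h]

lemma face_subset_cube (f : Fin n → Option Bool) : face f ⊆ sFace n 1 0 univ := by
  rw [cube_eq_pi]
  exact Set.pi_mono fun i _ => coordSet_subset_Icc (f i)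

lemma face_mem_cubeFaces (f : Fin n → Option Bool) : face f ∈ cubeFaces n #(freeCoords f) :=
  ⟨face_mem_sFaces f, face_subset_cube f⟩

lemma exists_face_eq {G : Set (Fin n → ℝ)} {k : ℕ} (hG : G ∈ cubeFaces n k) :
    ∃ f, #(freeCoords f) = k ∧ G = face f := by
  obtain ⟨⟨v, S, rfl, rfl⟩, hsub⟩ := hG
  rw [sFace_one_eq_pi, cube_eq_pi, Set.univ_pi_subset_univ_pi_iff] at *
  have hne : ∀ i, (if i ∈ S then Set.Icc (v i : ℝ) (v i + 1) else {(v i : ℝ)}).Nonempty := by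
    intro i; split_ifs <;> simp
  obtain hsub | ⟨i, hi⟩ := hsub
  swap; · exact absurd hi (hne i).ne_empty
  choose f hf using fun i => exists_coordSet_eq (hsub i)
  refine ⟨f, congrArg card (by ext i; simp [freeCoords, (hf i).1]), ?_⟩
  exact congrArg _ (funext fun i => ((hf i).2).symm)

lemma face_subset_face_iff {f g : Fin n → Option Bool} :
    face f ⊆ face g ↔ ∀ i, g i = none ∨ f i = g i := by
  rw [face, face, Set.univ_pi_subset_univ_pi_iff]
  simp [coordSet_subset_coordSet_iff, (coordSet_nonempty _).ne_empty]

lemma face_injective : Function.Injective (face : (Fin n → Option Bool) → _) := by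
  intro f g h
  have hfg := face_subset_face_iff.1 h.le
  have hgf := face_subset_face_iff.1 h.ge
  funext i
  rcases hfg i with hg | hfg
  · rcases hgf i with hf | hgf
    · rw [hf, hg]
    · exact hgf.symm
  · exact hfg

lemma face_inter_eq_empty_iff {f g : Fin n → Option Bool} :
    face f ∩ face g = ∅ ↔ ∃ i c, f i = some c ∧ g i = some !c := by
  rw [face, face, ← Set.pi_inter_distrib, Set.univ_pi_eq_empty_iff]
  simp only [coordSet_inter_eq_empty_iff]

lemma face_inter_face_of_nonempty {f g : Fin n → Option Bool}
    (h : (face f ∩ face g).Nonempty) :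
    face f ∩ face g = face fun i => (f i).or (g i) := by
  rw [face, face, ← Set.pi_inter_distrib, Set.univ_pi_nonempty_iff] at *
  exact congrArg _ (funext fun i => coordSet_inter_coordSet_of_nonempty (h i))

lemma freeCoords_or (f g : Fin n → Option Bool) :
    freeCoords (fun i => (f i).or (g i)) = freeCoords f ∩ freeCoords g := by
  ext i
  simp [freeCoords]

lemma ncard_cubeFaces_filter {k : ℕ} {P : Set (Fin n → ℝ) → Prop}
    {Q : (Fin n → Option Bool) → Prop} [DecidablePred Q] (hPQ : ∀ f, P (face f) ↔ Q f) :
    {G ∈ cubeFaces n k | P G}.ncard = #{f | #(freeCoords f) = k ∧ Q f} := by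
  have : {G ∈ cubeFaces n k | P G} = face '' ↑({f | #(freeCoords f) = k ∧ Q f} : Finset _) := by
    ext G
    constructor
    · rintro ⟨hG, hP⟩
      obtain ⟨f, hf, rfl⟩ := exists_face_eq hG
      exact ⟨f, by simpa [hf] using (hPQ f).1 hP, rfl⟩
    · rintro ⟨f, hf, rfl⟩
      obtain ⟨rfl, hQ⟩ : #(freeCoords f) = k ∧ Q f := by simpa using hf
      exact ⟨face_mem_cubeFaces f, (hPQ f).2 hQ⟩
  rw [this, face_injective.injOn.ncard_image, Set.ncard_coe_finset]

def fixAt (i : Fin n) (a : Bool) : Fin n → Option Bool :=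
  Function.update (fun _ => none) i (some a)

lemma freeCoords_fixAt (i : Fin n) (a : Bool) : freeCoords (fixAt i a) = {i}ᶜ := by
  ext k
  simp [freeCoords, fixAt, Function.update_apply]

lemma face_subset_face_fixAt_iff {g : Fin n → Option Bool} {i : Fin n} {a : Bool} :
    face g ⊆ face (fixAt i a) ↔ g i = some a := by
  rw [face_subset_face_iff]
  constructor
  · intro h
    simpa [fixAt] using h i
  · intro h k
    by_cases hki : k = i
    · subst hki
      simp [fixAt, h]
    · simp [fixAt, hki]

lemma face_fixAt_mem_cubeFaces (i : Fin n) (a : Bool) :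
    face (fixAt i a) ∈ cubeFaces n (n - 1) := by
  simpa [freeCoords_fixAt, card_compl] using face_mem_cubeFaces (fixAt i a)

lemma face_fixAt_inter_face_fixAt_mem_sFaces {i j : Fin n} (hij : i ≠ j) (a b : Bool) :
    face (fixAt i a) ∩ face (fixAt j b) ∈ sFaces n 1 (n - 2) := by
  have hne : (face (fixAt i a) ∩ face (fixAt j b)).Nonempty := by
    rw [Set.nonempty_iff_ne_empty, Ne, face_inter_eq_empty_iff]
    rintro ⟨k, c, hi, hj⟩
    simp only [fixAt, Function.update_apply] at hi hj
    split_ifs at hi hj with hki hkj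
    exact hij (hki.symm.trans hkj)
  rw [face_inter_face_of_nonempty hne]
  convert face_mem_sFaces _
  rw [freeCoords_or, freeCoords_fixAt, freeCoords_fixAt, ← compl_union, card_compl,
    ← insert_eq, card_pair hij, Fintype.card_fin]

lemma exists_two_fixed {f : Fin n → Option Bool} (hf : #(freeCoords f) + 2 = n) :
    ∃ i j a b, i ≠ j ∧ f i = some a ∧ f j = some b ∧ ∀ k, k ≠ i → k ≠ j → f k = none := by
  have : #(freeCoords f)ᶜ = 2 := by rw [card_compl, Fintype.card_fin]; omega
  obtain ⟨i, j, hij, hfix⟩ := card_eq_two.1 this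
  have hfix' : ∀ k, f k ≠ none ↔ k = i ∨ k = j := fun k => by
    simpa [freeCoords] using congrArg (k ∈ ·) hfix
  obtain ⟨a, ha⟩ := Option.ne_none_iff_exists'.1 ((hfix' i).2 (.inl rfl))
  obtain ⟨b, hb⟩ := Option.ne_none_iff_exists'.1 ((hfix' j).2 (.inr rfl))
  exact ⟨i, j, a, b, hij, ha, hb, fun k hki hkj => not_not.1 fun h => by
    rcases (hfix' k).1 h with h | h <;> contradiction⟩

lemma face_fixAt_not_inter_eq_empty {f : Fin n → Option Bool} {i : Fin n} {a : Bool}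
    (hfi : f i = some a) : face (fixAt i !a) ∩ face f = ∅ :=
  face_inter_eq_empty_iff.2 ⟨i, !a, by simp [fixAt], by simpa using hfi⟩

lemma face_subset_face_fixAt_or_of_inter_eq_empty {f g : Fin n → Option Bool} {i j : Fin n}
    {a b : Bool} (hfi : f i = some a) (hfj : f j = some b)
    (hf_free : ∀ k, k ≠ i → k ≠ j → f k = none) (h : face g ∩ face f = ∅) :
    face g ⊆ face (fixAt i !a) ∨ face g ⊆ face (fixAt j !b) := by
  obtain ⟨k, c, hgk, hfk⟩ := face_inter_eq_empty_iff.1 h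
  rw [face_subset_face_fixAt_iff, face_subset_face_fixAt_iff]
  rcases eq_or_ne k i with rfl | hki
  · left
    simp_all
  rcases eq_or_ne k j with rfl | hkj
  · right
    simp_all
  · simp [hf_free k hki hkj] at hfk

lemma card_codes_meeting : ∀ f : Fin 4 → Option Bool, #(freeCoords f) = 2 →
    #{g | #(freeCoords g) = 2 ∧ g ≠ f ∧ ¬∃ i c, g i = some c ∧ f i = some !c} = 12 := by
  decide

lemma card_codes_disjoint : ∀ f : Fin 4 → Option Bool, #(freeCoords f) = 2 →
    #{g | #(freeCoords g) = 2 ∧ ∃ i c, g i = some c ∧ f i = some !c} = 11 := by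
  decide

lemma card_codes_fixed : ∀ (i : Fin 4) (a : Bool),
    #{g : Fin 4 → Option Bool | #(freeCoords g) = 2 ∧ g i = some a} = 6 := by
  decide

lemma card_codes_fixed_not_fixed : ∀ (i j : Fin 4) (a b : Bool), i ≠ j →
    #{g : Fin 4 → Option Bool | #(freeCoords g) = 2 ∧ g j = some b ∧ g i ≠ some a} = 5 := by
  decide

end UnitCube

open UnitCube

/-- a 2-face `F` of the 4-cube meets exactly twelve other 2-faces, and the
eleven 2-faces disjoint from `F` split as six in a 3-face `C³` and five in a neighboring
3-face `D³` with `C³ ∩ D³` a 2-face. -/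
theorem one_square_complement (F : Set (Fin 4 → ℝ)) (hF : F ∈ twoFacesQ4) :
    {G ∈ twoFacesQ4 | G ≠ F ∧ (G ∩ F).Nonempty}.ncard = 12 ∧
    {G ∈ twoFacesQ4 | G ∩ F = ∅}.ncard = 11 ∧
    ∃ C ∈ threeFacesQ4, ∃ D ∈ threeFacesQ4,
      C ∩ D ∈ sFaces 4 1 2 ∧
      {G ∈ twoFacesQ4 | G ∩ F = ∅ ∧ G ⊆ C}.ncard = 6 ∧
      {G ∈ twoFacesQ4 | G ∩ F = ∅ ∧ G ⊆ D ∧ ¬ G ⊆ C}.ncard = 5 ∧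
      ∀ G ∈ twoFacesQ4, G ∩ F = ∅ → G ⊆ C ∨ G ⊆ D := by
  obtain ⟨f, hf, rfl⟩ := exists_face_eq hF
  obtain ⟨i, j, a, b, hij, hfi, hfj, hf_free⟩ :=
    exists_two_fixed (by rw [hf] : #(freeCoords f) + 2 = 4)
  have hCF := face_fixAt_not_inter_eq_empty hfi
  have hDF := face_fixAt_not_inter_eq_empty hfj
  refine ⟨?_, ?_, _, face_fixAt_mem_cubeFaces i !a, _, face_fixAt_mem_cubeFaces j !b,
    face_fixAt_inter_face_fixAt_mem_sFaces hij _ _, ?_, ?_, ?_⟩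
  · refine (ncard_cubeFaces_filter fun g => ?_).trans (card_codes_meeting f hf)
    simp only [face_injective.ne_iff, Set.nonempty_iff_ne_empty, ne_eq, face_inter_eq_empty_iff]
  · exact (ncard_cubeFaces_filter fun g => face_inter_eq_empty_iff).trans
      (card_codes_disjoint f hf)
  · refine (ncard_cubeFaces_filter fun g => ?_).trans (card_codes_fixed i !a)
    rw [← face_subset_face_fixAt_iff]
    exact ⟨And.right, fun h => ⟨Set.subset_eq_empty (Set.inter_subset_inter_left _ h) hCF, h⟩⟩
  · refine (ncard_cubeFaces_filter fun g => ?_).trans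
      (card_codes_fixed_not_fixed i j (!a) (!b) hij)
    rw [ne_eq, ← face_subset_face_fixAt_iff, ← face_subset_face_fixAt_iff]
    exact ⟨And.right, fun h => ⟨Set.subset_eq_empty (Set.inter_subset_inter_left _ h.1) hDF, h⟩⟩
  · rintro G hG hGF
    obtain ⟨g, -, rfl⟩ := exists_face_eq hG
    exact face_subset_face_fixAt_or_of_inter_eq_empty hfi hfj hf_free hGF
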